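/- Proposition 1 (Nash equilibrium of the generalized Friedkin–Johnsen dynamics): let s : Fin n → ℝ and define z = (L + 1)⁻¹ *ᵥ s. Then for every i, (1 + ∑_j |A i j|) · z i = s i + ∑_j A i j · z j. Moreover z is the unique vector with this property: any z' : Fin n → ℝ satisfying (1 + ∑_j |A i j|) · z' i = s i + ∑_j A i j · z' j for all i equals z. -/
import Mathlib


open Matrix

lemma fj_aux (n : ℕ) (A : Matrix (Fin n) (Fin n) ℝ)
    (L : Matrix (Fin n) (Fin n) ℝ)
    (hL : L = Matrix.diagonal (fun i => ∑ j, |A i j|) - A) :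
    IsUnit (L + 1) := by
  rw [Matrix.isUnit_iff_isUnit_det, isUnit_iff_ne_zero]
  apply det_ne_zero_of_sum_row_lt_diag
  intro k
  have hd : (L + 1) k k = 1 + ∑ j, |A k j| - A k k := by
    simp [hL, Matrix.one_apply]; ring
  have hsum : ∑ j ∈ Finset.univ.erase k, ‖(L + 1) k j‖
      = ∑ j ∈ Finset.univ.erase k, |A k j| := by
    refine Finset.sum_congr rfl fun j hj => ?_
    have : j ≠ k := Finset.ne_of_mem_erase hj
    simp [hL, Matrix.one_apply, Matrix.diagonal_apply_ne' _ this, this, this.symm, abs_neg]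
  rw [hsum, hd]
  have h1 : ∑ j, |A k j| = |A k k| + ∑ j ∈ Finset.univ.erase k, |A k j| := by
    rw [← Finset.add_sum_erase _ _ (Finset.mem_univ k)]
  have h2 : A k k ≤ |A k k| := le_abs_self _
  have h3 : 0 ≤ ∑ j ∈ Finset.univ.erase k, |A k j| :=
    Finset.sum_nonneg fun _ _ => abs_nonneg _
  rw [Real.norm_eq_abs, abs_of_pos (by rw [h1]; linarith)]
  rw [h1]; linarith

lemma fj_mulvec (n : ℕ) (A : Matrix (Fin n) (Fin n) ℝ)
    (L : Matrix (Fin n) (Fin n) ℝ)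
    (hL : L = Matrix.diagonal (fun i => ∑ j, |A i j|) - A)
    (w : Fin n → ℝ) (i : Fin n) :
    ((L + 1) *ᵥ w) i = (1 + ∑ j, |A i j|) * w i - ∑ j, A i j * w j := by
  simp only [hL, Matrix.mulVec, dotProduct, Matrix.add_apply,
    Matrix.sub_apply, Matrix.one_apply, Matrix.diagonal_apply, ite_mul, zero_mul,
    sub_mul, add_mul, Finset.sum_add_distrib, Finset.sum_sub_distrib,
    Finset.sum_ite_eq, Finset.mem_univ, if_true, one_mul]
  ring

/-- Proposition 1: the vector `z = (L + I)⁻¹ s` satisfies the Nash-equilibrium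
equations of the generalized Friedkin–Johnsen dynamics,
`(1 + ∑_j |A i j|) z i = s i + ∑_j A i j * z j` for every node `i`,
and it is the unique such vector. -/
theorem friedkin_johnsen_nash_equilibrium
    (n : ℕ) (A : Matrix (Fin n) (Fin n) ℝ)
    (L : Matrix (Fin n) (Fin n) ℝ)
    (hL : L = Matrix.diagonal (fun i => ∑ j, |A i j|) - A)
    (s : Fin n → ℝ) (z : Fin n → ℝ)
    (hz : z = (L + 1)⁻¹ *ᵥ s) :
    (∀ i, (1 + ∑ j, |A i j|) * z i = s i + ∑ j, A i j * z j) ∧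
      (∀ z' : Fin n → ℝ,
        (∀ i, (1 + ∑ j, |A i j|) * z' i = s i + ∑ j, A i j * z' j) → z' = z) := by
  have hU := fj_aux n A L hL
  have hMz : (L + 1) *ᵥ z = s := by
    rw [hz, Matrix.mulVec_mulVec, Matrix.mul_nonsing_inv _
      ((Matrix.isUnit_iff_isUnit_det _).mp hU), Matrix.one_mulVec]
  constructor
  · intro i
    have := congrFun hMz i
    rw [fj_mulvec n A L hL z i] at this
    linarith
  · intro z' hz'
    have hMz' : (L + 1) *ᵥ z' = s := by
      funext i
      rw [fj_mulvec n A L hL z' i, hz' i]; ring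
    have : (L + 1) *ᵥ z' = (L + 1) *ᵥ z := by rw [hMz, hMz']
    exact (Matrix.mulVec_injective_iff_isUnit.mpr hU) this
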